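/- arXiv:2402.04104 — 7 statements merged into one kernel-verified Lean document; each statement's English description precedes it below -/
import Mathlib

section
/- Let f : [0,1] → ℝ be continuous and concave with f(0) = 0 = f(1) and max_{[0,1]} f > 0. Fix ρ_R ∈ (0,1) and α ∈ ℝ with α > f(ρ_R)/ρ_R. Then there exists a unique ρ_M ∈ (0, ρ_R) such that f(ρ_R) + f(ρ_M) = α (ρ_R − ρ_M). -/
/-!
Put `g ρ = f ρR + f ρ - α (ρR - ρ)`, a concave function on `[0, 1]`. Concavity with
`f 0 = f 1 = 0` and a positive value forces `f > 0` on `(0, 1)`, so `g ρR = 2 f ρR > 0`,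
while `g 0 = f ρR - α ρR < 0`; the intermediate value theorem gives a root in `(0, ρR)`.
A concave function that vanishes at `y` and is positive at `ρR` is positive on `(y, ρR)`,
so the root is unique.
-/

open Set

theorem ConcaveOn.pos_of_mem_openSegment {𝕜 E : Type*} [Field 𝕜] [LinearOrder 𝕜]
    [IsStrictOrderedRing 𝕜] [AddCommGroup E] [Module 𝕜 E] {s : Set E} {f : E → 𝕜}
    (hf : ConcaveOn 𝕜 s f) {x y z : E} (hx : x ∈ s) (hy : y ∈ s)
    (hz : z ∈ openSegment 𝕜 x y) (hfx : 0 ≤ f x) (hfy : 0 < f y) : 0 < f z := by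
  obtain ⟨a, b, ha, hb, hab, rfl⟩ := hz
  calc (0 : 𝕜) < a • f x + b • f y := by simp only [smul_eq_mul]; positivity
    _ ≤ f (a • x + b • y) := hf.2 hx hy ha.le hb.le hab

theorem ConcaveOn.pos_of_mem_Ioo {f : ℝ → ℝ} {a b : ℝ} (hf : ConcaveOn ℝ (Icc a b) f)
    (ha : 0 ≤ f a) (hb : 0 ≤ f b) (hpos : ∃ x ∈ Icc a b, 0 < f x) {ρ : ℝ}
    (hρ : ρ ∈ Ioo a b) : 0 < f ρ := by
  obtain ⟨x, hx, hfx⟩ := hpos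
  have hab : a ≤ b := hρ.1.le.trans hρ.2.le
  rcases lt_trichotomy ρ x with hρx | rfl | hxρ
  · refine hf.pos_of_mem_openSegment (left_mem_Icc.2 hab) hx ?_ ha hfx
    rw [openSegment_eq_Ioo (hρ.1.trans hρx)]
    exact ⟨hρ.1, hρx⟩
  · exact hfx
  · refine hf.pos_of_mem_openSegment (right_mem_Icc.2 hab) hx ?_ hb hfx
    rw [openSegment_symm, openSegment_eq_Ioo (hxρ.trans hρ.2)]
    exact ⟨hxρ, hρ.2⟩

theorem ConcaveOn.eq_of_apply_eq_zero {g : ℝ → ℝ} {s : Set ℝ} (hg : ConcaveOn ℝ s g)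
    {b y z : ℝ} (hb : b ∈ s) (hy : y ∈ s) (hz : z ∈ s) (hyb : y < b) (hzb : z < b)
    (hgb : 0 < g b) (hgy : g y = 0) (hgz : g z = 0) : y = z := by
  have pos_between {u v : ℝ} (hu : u ∈ s) (huv : u < v) (hvb : v < b) (hgu : g u = 0) :
      0 < g v := by
    refine hg.pos_of_mem_openSegment hu hb ?_ hgu.ge hgb
    rw [openSegment_eq_Ioo (huv.trans hvb)]
    exact ⟨huv, hvb⟩
  rcases lt_trichotomy y z with hyz | hyz | hzy
  · exact absurd hgz (pos_between hy hyz hzb hgy).ne'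
  · exact hyz
  · exact absurd hgy (pos_between hz hzy hyb hgz).ne'

/-- Lemma 2.1: existence and uniqueness of the intermediate state `ρ_M` solving the
Rankine–Hugoniot condition `f(ρ_R) + f(ρ_M) = α (ρ_R − ρ_M)` when `α > f(ρ_R)/ρ_R`. -/
theorem stmt_0
    (f : ℝ → ℝ)
    (hcont : ContinuousOn f (Set.Icc 0 1))
    (hconc : ConcaveOn ℝ (Set.Icc 0 1) f)
    (hf0 : f 0 = 0) (hf1 : f 1 = 0)
    (hmax : ∃ x ∈ Set.Icc (0:ℝ) 1, 0 < f x)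
    (ρR : ℝ) (hρR : ρR ∈ Set.Ioo (0:ℝ) 1)
    (α : ℝ) (hα : f ρR / ρR < α) :
    ∃! ρM : ℝ, ρM ∈ Set.Ioo 0 ρR ∧ f ρR + f ρM = α * (ρR - ρM) := by
  obtain ⟨hρR0, hρR1⟩ := hρR
  have hfρR : 0 < f ρR := hconc.pos_of_mem_Ioo hf0.ge hf1.ge hmax ⟨hρR0, hρR1⟩
  have hαρR : f ρR < α * ρR := (div_lt_iff₀ hρR0).1 hα
  set g : ℝ → ℝ := fun ρ ↦ f ρR + f ρ - α * (ρR - ρ) with hg_def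
  have hg : ConcaveOn ℝ (Icc 0 1) g :=
    ((hconc.add ((LinearMap.mul ℝ ℝ α).concaveOn (convex_Icc 0 1))).add_const
      (f ρR - α * ρR)).congr fun ρ _ ↦ by
        simp only [hg_def, Pi.add_apply, LinearMap.mul_apply']
        ring
  have hsub : Icc 0 ρR ⊆ Icc (0 : ℝ) 1 := Icc_subset_Icc le_rfl hρR1.le
  have hg_cont : ContinuousOn g (Icc 0 ρR) := by
    simp only [hg_def]
    exact ((continuousOn_const.add (hcont.mono hsub)).sub
      (continuousOn_const.mul (continuousOn_const.sub continuousOn_id)))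
  have hgρR : 0 < g ρR := by simp only [hg_def]; linarith
  have hg0 : g 0 < 0 := by simp only [hg_def, hf0]; linarith
  obtain ⟨ρM, hρM, hgρM⟩ := intermediate_value_Ioo hρR0.le hg_cont ⟨hg0, hgρR⟩
  have hρM_eq : f ρR + f ρM = α * (ρR - ρM) := by simp only [hg_def] at hgρM; linarith
  have mem {ρ : ℝ} (hρ : ρ ∈ Ioo 0 ρR) : ρ ∈ Icc (0 : ℝ) 1 :=
    hsub (Ioo_subset_Icc_self hρ)
  refine ⟨ρM, ⟨hρM, hρM_eq⟩, fun ρ ⟨hρ, hρ_eq⟩ ↦ ?_⟩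
  exact hg.eq_of_apply_eq_zero ⟨hρR0.le, hρR1.le⟩ (mem hρ) (mem hρM) hρ.2 hρM.2
    hgρR (by simp only [hg_def]; linarith) hgρM
end

section
/- Let f : [0,1] → ℝ be continuous and concave with f(0) = 0 = f(1), and let α ∈ ℝ. Suppose (p_l, p_r) ∈ [0,1]² and (q_l, q_r) ∈ [0,1]² both belong to the germ G̃_α, i.e. f(p_r) + f(p_l) = α (p_r − p_l) and f(q_r) + f(q_l) = α (q_r − q_l). Then the L¹-dissipativity inequality holds: sign(p_l − q_l)·(f(q_l) − f(p_l)) − sign(p_r − q_r)·(f(p_r) − f(q_r)) ≥ α (|p_l − q_l| − |p_r − q_r|), where sign(0) = 0. -/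
/-!
Write `D = (f q_l + α q_l) - (f p_l + α p_l)`. The two germ relations make the right-hand defect
`f p_r - f q_r - α (p_r - q_r)` equal to `D` as well, so the inequality reduces to
`(sign (p_l - q_l) - sign (p_r - q_r)) D ≥ 0`, which only needs a sign of `D` when the traces
cross. That sign follows from concavity of `f ± α·id` and `f ≥ 0`.
-/

open Set

lemma ConcaveOn.le_left_of_lt {s : Set ℝ} {g : ℝ → ℝ} (hg : ConcaveOn ℝ s g) {x a b : ℝ}
    (hx : x ∈ s) (hb : b ∈ s) (hxa : x ≤ a) (hab : a ≤ b) (hgab : g a < g b) : g x ≤ g a := by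
  simpa [hgab.not_ge] using hg.ge_on_segment hx hb (Icc_subset_segment ⟨hxa, hab⟩)

/-- Both `g` and `h` are smaller at `min a c` than at `a`, resp. `c`. -/
lemma ConcaveOn.add_nonneg_of_lt_of_lt {s : Set ℝ} {g h : ℝ → ℝ} (hg : ConcaveOn ℝ s g)
    (hh : ConcaveOn ℝ s h) (hgh : ∀ x ∈ s, 0 ≤ g x + h x) {a b c d : ℝ} (ha : a ∈ s)
    (hb : b ∈ s) (hc : c ∈ s) (hd : d ∈ s) (hab : a ≤ b) (hcd : c ≤ d) (hgab : g a < g b)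
    (hhcd : h c < h d) : 0 ≤ g a + h c := by
  have hmin : min a c ∈ s := by rcases min_choice a c with h | h <;> rw [h] <;> assumption
  have hga := hg.le_left_of_lt hmin hb (min_le_left a c) hab hgab
  have hhc := hh.le_left_of_lt hmin hd (min_le_right a c) hcd hhcd
  linarith [hgh _ hmin]

lemma ConcaveOn.nonneg_of_endpoints_nonneg {f : ℝ → ℝ} {a b : ℝ}
    (hf : ConcaveOn ℝ (Icc a b) f) (ha : 0 ≤ f a) (hb : 0 ≤ f b) {x : ℝ} (hx : x ∈ Icc a b) :
    0 ≤ f x := by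
  have hab : a ≤ b := hx.1.trans hx.2
  exact le_trans (le_min ha hb) <| hf.ge_on_segment (left_mem_Icc.2 hab) (right_mem_Icc.2 hab)
    (Icc_subset_segment hx)

/-- The germ relation reads `g p_l + h p_r = 0` with `g = f + α·id` and `h = f - α·id` concave
and `g + h = 2f ≥ 0`. -/
lemma add_mul_le_of_mem_germ_of_lt_of_lt {f : ℝ → ℝ} (hconc : ConcaveOn ℝ (Icc 0 1) f)
    (hf0 : f 0 = 0) (hf1 : f 1 = 0) {α pl pr ql qr : ℝ} (hpl : pl ∈ Icc (0:ℝ) 1)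
    (hpr : pr ∈ Icc (0:ℝ) 1) (hql : ql ∈ Icc (0:ℝ) 1) (hqr : qr ∈ Icc (0:ℝ) 1)
    (hp : f pr + f pl = α * (pr - pl)) (hq : f qr + f ql = α * (qr - ql)) (hl : ql < pl)
    (hr : pr < qr) :
    f pl + α * pl ≤ f ql + α * ql := by
  by_contra! hlt
  have hg : ConcaveOn ℝ (Icc 0 1) (fun x => f x + α * x) :=
    hconc.add ((LinearMap.mulLeft ℝ α).concaveOn (convex_Icc 0 1))
  have hh : ConcaveOn ℝ (Icc 0 1) (fun x => f x - α * x) :=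
    hconc.sub ((LinearMap.mulLeft ℝ α).convexOn (convex_Icc 0 1))
  have hsum : ∀ x ∈ Icc (0:ℝ) 1, 0 ≤ (f x + α * x) + (f x - α * x) := fun x hx => by
    linarith [hconc.nonneg_of_endpoints_nonneg hf0.ge hf1.ge hx]
  have := hg.add_nonneg_of_lt_of_lt hh hsum hql hpl hpr hqr hl.le hr.le hlt
    (by linarith)
  linarith

lemma Real.abs_eq_sign_mul_self (x : ℝ) : |x| = Real.sign x * x := by
  rcases lt_trichotomy x 0 with hx | rfl | hx
  · rw [Real.sign_of_neg hx, abs_of_neg hx]; ring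
  · simp
  · rw [Real.sign_of_pos hx, abs_of_pos hx]; ring

lemma sign_sub_sign_mul_nonneg {u v D : ℝ} (hu : u = 0 → D = 0) (hv : v = 0 → D = 0)
    (hpos : 0 < u → v < 0 → 0 ≤ D) (hneg : u < 0 → 0 < v → D ≤ 0) :
    0 ≤ (Real.sign u - Real.sign v) * D := by
  rcases lt_trichotomy u 0 with hu' | rfl | hu' <;>
    rcases lt_trichotomy v 0 with hv' | rfl | hv'
  all_goals simp_all [Real.sign_of_neg, Real.sign_of_pos] <;> linarith

theorem stmt_2_general
    (f : ℝ → ℝ)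
    (hconc : ConcaveOn ℝ (Set.Icc 0 1) f)
    (hf0 : f 0 = 0) (hf1 : f 1 = 0)
    (α : ℝ)
    (pl pr ql qr : ℝ)
    (hpl : pl ∈ Set.Icc (0:ℝ) 1) (hpr : pr ∈ Set.Icc (0:ℝ) 1)
    (hql : ql ∈ Set.Icc (0:ℝ) 1) (hqr : qr ∈ Set.Icc (0:ℝ) 1)
    (hp : f pr + f pl = α * (pr - pl))
    (hq : f qr + f ql = α * (qr - ql)) :
    Real.sign (pl - ql) * (f ql - f pl) - Real.sign (pr - qr) * (f pr - f qr)
      ≥ α * (|pl - ql| - |pr - qr|) := by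
  have key : 0 ≤ (Real.sign (pl - ql) - Real.sign (pr - qr)) *
      ((f ql + α * ql) - (f pl + α * pl)) := by
    refine sign_sub_sign_mul_nonneg (fun hl => ?_) (fun hr => ?_) (fun hl hr => ?_)
      (fun hl hr => ?_)
    · obtain rfl : pl = ql := by linarith
      ring
    · obtain rfl : pr = qr := by linarith
      linarith
    · linarith [add_mul_le_of_mem_germ_of_lt_of_lt hconc hf0 hf1 hpl hpr hql hqr hp hq
        (by linarith) (by linarith)]
    · linarith [add_mul_le_of_mem_germ_of_lt_of_lt hconc hf0 hf1 hql hqr hpl hpr hq hp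
        (by linarith) (by linarith)]
  rw [Real.abs_eq_sign_mul_self (pl - ql), Real.abs_eq_sign_mul_self (pr - qr)]
  linear_combination key + Real.sign (pr - qr) * (hp - hq)

/-- The germ `G̃_α` is L¹-dissipative: for any two pairs of traces in the germ, the
difference of the Kruzhkov entropy fluxes across the interface is bounded below by
`α (|p_l − q_l| − |p_r − q_r|)`. -/
theorem stmt_2
    (f : ℝ → ℝ)
    (hcont : ContinuousOn f (Set.Icc 0 1))
    (hconc : ConcaveOn ℝ (Set.Icc 0 1) f)
    (hf0 : f 0 = 0) (hf1 : f 1 = 0)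
    (α : ℝ)
    (pl pr ql qr : ℝ)
    (hpl : pl ∈ Set.Icc (0:ℝ) 1) (hpr : pr ∈ Set.Icc (0:ℝ) 1)
    (hql : ql ∈ Set.Icc (0:ℝ) 1) (hqr : qr ∈ Set.Icc (0:ℝ) 1)
    (hp : f pr + f pl = α * (pr - pl))
    (hq : f qr + f ql = α * (qr - ql)) :
    Real.sign (pl - ql) * (f ql - f pl) - Real.sign (pr - qr) * (f pr - f qr)
      ≥ α * (|pl - ql| - |pr - qr|) :=
  stmt_2_general f hconc hf0 hf1 α pl pr ql qr hpl hpr hql hqr hp hq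
end

section
/- Let f : [0,1] → ℝ be concave with f(0) = 0, and let α ∈ ℝ. Then the interface flux h₀ is nondecreasing in its first argument and nonincreasing in its second argument: for all a, a', b, b' ∈ [0,1], if a ≤ a' then h₀(a,b,α) ≤ h₀(a',b,α), and if b ≤ b' then h₀(a,b',α) ≤ h₀(a,b,α). -/
/-!
For `β ∈ ℝ` the map `φ x = β x - f x` is convex and vanishes at `0`, so its secant slope `φ x / x`
from the origin is nondecreasing on `(0, 1]`. Hence `max (φ x) 0 = x · max (φ x / x) 0` is a
product of two nonnegative nondecreasing factors, and `h₀` is a difference of two such terms,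
with `β = -α` in the first argument and `β = α` in the second.
-/

/-- Godunov-type interface flux along the interface of slope `α`. -/
noncomputable def h0flux (f : ℝ → ℝ) (a b α : ℝ) : ℝ :=
  -max (α * b - f b) 0 + max (-α * a - f a) 0

open Set

theorem ConvexOn.monotoneOn_max_zero {s : Set ℝ} {φ : ℝ → ℝ} (hφ : ConvexOn ℝ s φ)
    (hs : (0 : ℝ) ∈ s) (hφ0 : φ 0 = 0) : MonotoneOn (fun x ↦ max (φ x) 0) (s ∩ Ici 0) := by
  rintro x ⟨hxs, hx0⟩ y ⟨hys, -⟩ hxy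
  rcases (mem_Ici.1 hx0).eq_or_lt with rfl | hx
  · simp [hφ0]
  have hy : 0 < y := hx.trans_le hxy
  have hslope : φ x / x ≤ φ y / y := by
    simpa [hφ0] using hφ.secant_mono hs hxs hys hx.ne' hy.ne' hxy
  calc max (φ x) 0 = x * max (φ x / x) 0 := by
        rw [mul_max_of_nonneg _ _ hx.le, mul_div_cancel₀ _ hx.ne', mul_zero]
    _ ≤ y * max (φ y / y) 0 := mul_le_mul hxy (max_le_max_right 0 hslope) (le_max_right _ _) hy.le
    _ = max (φ y) 0 := by rw [mul_max_of_nonneg _ _ hy.le, mul_div_cancel₀ _ hy.ne', mul_zero]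

theorem ConcaveOn.monotoneOn_max_mul_sub_zero {s : Set ℝ} {f : ℝ → ℝ} (hf : ConcaveOn ℝ s f)
    (hs : (0 : ℝ) ∈ s) (hf0 : f 0 = 0) (β : ℝ) :
    MonotoneOn (fun x ↦ max (β * x - f x) 0) (s ∩ Ici 0) :=
  (((LinearMap.mul ℝ ℝ β).convexOn hf.1).sub hf).monotoneOn_max_zero hs (by simp [hf0])

/-- The interface flux `h₀` is nondecreasing in its first argument and
nonincreasing in its second argument. -/
theorem stmt_5
    (f : ℝ → ℝ)
    (hconc : ConcaveOn ℝ (Set.Icc 0 1) f)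
    (hf0 : f 0 = 0)
    (α : ℝ) :
    ∀ a a' b b' : ℝ, a ∈ Set.Icc (0:ℝ) 1 → a' ∈ Set.Icc (0:ℝ) 1 →
      b ∈ Set.Icc (0:ℝ) 1 → b' ∈ Set.Icc (0:ℝ) 1 →
      (a ≤ a' → h0flux f a b α ≤ h0flux f a' b α) ∧
      (b ≤ b' → h0flux f a b' α ≤ h0flux f a b α) := by
  have hmono := hconc.monotoneOn_max_mul_sub_zero (left_mem_Icc.2 zero_le_one) hf0
  intro a a' b b' ha ha' hb hb'
  refine ⟨fun haa' ↦ ?_, fun hbb' ↦ ?_⟩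
  · have := hmono (-α) ⟨ha, ha.1⟩ ⟨ha', ha'.1⟩ haa'
    simp only [h0flux] at this ⊢
    linarith
  · have := hmono α ⟨hb, hb.1⟩ ⟨hb', hb'.1⟩ hbb'
    simp only [h0flux] at this ⊢
    linarith
end

section
/- Let f : [0,1] → ℝ be continuous and Lipschitz on [0,1] with constant L > 0. Then the Godunov fluxes satisfy, for all a, a', b, b' ∈ [0,1], |h^±(a,b) − h^±(a',b')| ≤ L (|a − a'| + |b − b'|). -/
/-!
Since `Icc a b` moves by at most `|a - a'| + |b - b'|` in the Hausdorff sense when its endpoints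
do, projecting onto the nearer interval shows that `(a, b) ↦ inf f[a, b]` is `L`-Lipschitz on
`a ≤ b`. The identity `h⁺_f(a, b) = -h⁺_{-f}(b, a)` turns the `sup` branch into an `inf` branch,
and the two branches agree on the diagonal, so `a ↦ h⁺(a, b)` is Lipschitz on both sides of `b`
and hence on all of `[0, 1]`. The swap identity again gives the second argument, and
`h⁻_f = h⁺_{-f}`.
-/

/-- Godunov numerical flux for the flux `+f`. -/
noncomputable def hplus (f : ℝ → ℝ) (a b : ℝ) : ℝ :=
  if a ≤ b then sInf (f '' Set.Icc a b) else sSup (f '' Set.Icc b a)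

/-- Godunov numerical flux for the flux `−f`. -/
noncomputable def hminus (f : ℝ → ℝ) (a b : ℝ) : ℝ :=
  if a ≤ b then sInf ((fun s => -f s) '' Set.Icc a b)
  else sSup ((fun s => -f s) '' Set.Icc b a)

open Set NNReal

theorem sInf_image_le_sInf_image_add {α : Type*} {f : α → ℝ} {S T : Set α} {c : ℝ}
    (hS : S.Nonempty) (hT : BddBelow (f '' T)) (h : ∀ x ∈ S, ∃ y ∈ T, f y ≤ f x + c) :
    sInf (f '' T) ≤ sInf (f '' S) + c := by
  rw [← sub_le_iff_le_add]
  refine le_csInf (hS.image f) ?_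
  rintro _ ⟨x, hx, rfl⟩
  obtain ⟨y, hy, hyx⟩ := h x hx
  linarith [csInf_le hT (mem_image_of_mem f hy)]

theorem Real.sSup_image_eq_neg_sInf_image_neg {α : Type*} (f : α → ℝ) (S : Set α) :
    sSup (f '' S) = -sInf ((fun x => -f x) '' S) := by
  rw [← image_image Neg.neg f, image_neg_eq_neg, Real.sInf_neg, neg_neg]

section Lipschitz

variable {f : ℝ → ℝ} {K : ℝ≥0} {s : Set ℝ} [s.OrdConnected] {a b a' b' : ℝ}

theorem LipschitzOnWith.sInf_image_Icc_le_add (hf : LipschitzOnWith K f s) (ha : a ∈ s)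
    (hb : b ∈ s) (ha' : a' ∈ s) (hb' : b' ∈ s) (hab : a ≤ b) (hab' : a' ≤ b') :
    sInf (f '' Icc a' b') ≤ sInf (f '' Icc a b) + K * (|a - a'| + |b - b'|) := by
  have hsub : Icc a b ⊆ s := Set.Icc_subset s ha hb
  have hsub' : Icc a' b' ⊆ s := Set.Icc_subset s ha' hb'
  refine sInf_image_le_sInf_image_add (nonempty_Icc.2 hab)
    (isCompact_Icc.bddBelow_image (hf.continuousOn.mono hsub')) fun x hx => ?_
  have hy : max a' (min x b') ∈ Icc a' b' := ⟨le_max_left _ _, max_le hab' (min_le_right _ _)⟩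
  have hdist : |max a' (min x b') - x| ≤ |a - a'| + |b - b'| := by
    grind [abs_le, le_abs_self, neg_abs_le]
  have hlip : f (max a' (min x b')) - f x ≤ K * |max a' (min x b') - x| := by
    simpa only [Real.dist_eq] using (le_abs_self _).trans (hf.dist_le_mul _ (hsub' hy) x (hsub hx))
  refine ⟨_, hy, ?_⟩
  calc f (max a' (min x b')) ≤ f x + K * |max a' (min x b') - x| := by linarith
    _ ≤ f x + K * (|a - a'| + |b - b'|) := by gcongr

theorem LipschitzOnWith.abs_sInf_image_Icc_sub_le (hf : LipschitzOnWith K f s) (ha : a ∈ s)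
    (hb : b ∈ s) (ha' : a' ∈ s) (hb' : b' ∈ s) (hab : a ≤ b) (hab' : a' ≤ b') :
    |sInf (f '' Icc a b) - sInf (f '' Icc a' b')| ≤ K * (|a - a'| + |b - b'|) := by
  have h₁ := hf.sInf_image_Icc_le_add ha hb ha' hb' hab hab'
  have h₂ := hf.sInf_image_Icc_le_add ha' hb' ha hb hab' hab
  rw [abs_sub_comm a', abs_sub_comm b'] at h₂
  exact abs_sub_le_iff.2 ⟨by linarith, by linarith⟩

theorem LipschitzOnWith.glue_Iic_Ici {g : ℝ → ℝ} {c : ℝ}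
    (hlo : LipschitzOnWith K g (s ∩ Iic c)) (hhi : LipschitzOnWith K g (s ∩ Ici c)) :
    LipschitzOnWith K g s := by
  refine LipschitzOnWith.of_dist_le_mul fun x hx y hy => ?_
  wlog hxy : x ≤ y generalizing x y
  · rw [dist_comm, dist_comm x]
    exact this y hy x hx (le_of_not_ge hxy)
  rcases le_total y c with hyc | hcy
  · exact hlo.dist_le_mul x ⟨hx, hxy.trans hyc⟩ y ⟨hy, hyc⟩
  rcases le_total c x with hcx | hxc
  · exact hhi.dist_le_mul x ⟨hx, hcx⟩ y ⟨hy, hcy⟩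
  have hc : c ∈ s := Set.OrdConnected.out ‹_› hx hy ⟨hxc, hcy⟩
  calc dist (g x) (g y) ≤ dist (g x) (g c) + dist (g c) (g y) := dist_triangle _ _ _
    _ ≤ K * dist x c + K * dist c y :=
      add_le_add (hlo.dist_le_mul x ⟨hx, hxc⟩ c ⟨hc, self_mem_Iic⟩)
        (hhi.dist_le_mul c ⟨hc, self_mem_Ici⟩ y ⟨hy, hcy⟩)
    _ = K * dist x y := by
      simp only [Real.dist_eq, abs_of_nonpos (sub_nonpos.2 hxc), abs_of_nonpos (sub_nonpos.2 hcy),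
        abs_of_nonpos (sub_nonpos.2 hxy)]
      ring

end Lipschitz

section Godunov

variable {f : ℝ → ℝ} {K : ℝ≥0} {s : Set ℝ} [s.OrdConnected] {a b a' b' : ℝ}

theorem hplus_of_le (h : a ≤ b) : hplus f a b = sInf (f '' Icc a b) := if_pos h

theorem hplus_of_ge (h : b ≤ a) : hplus f a b = sSup (f '' Icc b a) := by
  rcases h.eq_or_lt with rfl | hlt
  · simp [hplus]
  · exact if_neg hlt.not_ge

theorem hplus_eq_neg_hplus_neg_swap : hplus f a b = -hplus (fun x => -f x) b a := by
  rcases le_total a b with h | h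
  · rw [hplus_of_le h, hplus_of_ge h, Real.sSup_image_eq_neg_sInf_image_neg]
    simp only [neg_neg]
  · rw [hplus_of_ge h, hplus_of_le h, Real.sSup_image_eq_neg_sInf_image_neg]

theorem LipschitzOnWith.hplus_left (hf : LipschitzOnWith K f s) (hb : b ∈ s) :
    LipschitzOnWith K (hplus f · b) s := by
  refine LipschitzOnWith.glue_Iic_Ici (c := b) (.of_dist_le_mul fun x hx y hy => ?_)
    (.of_dist_le_mul fun x hx y hy => ?_)
  · rw [hplus_of_le hx.2, hplus_of_le hy.2, Real.dist_eq, Real.dist_eq]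
    simpa using hf.abs_sInf_image_Icc_sub_le hx.1 hb hy.1 hb hx.2 hy.2
  · rw [hplus_eq_neg_hplus_neg_swap, hplus_eq_neg_hplus_neg_swap (a := y), hplus_of_le hx.2,
      hplus_of_le hy.2, Real.dist_eq, Real.dist_eq, neg_sub_neg, abs_sub_comm]
    simpa using hf.neg.abs_sInf_image_Icc_sub_le hb hx.1 hb hy.1 hx.2 hy.2

theorem LipschitzOnWith.hplus_right (hf : LipschitzOnWith K f s) (ha : a ∈ s) :
    LipschitzOnWith K (hplus f a ·) s := by
  have hswap : (hplus f a ·) = -(hplus (fun x => -f x) · a) :=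
    funext fun _ => hplus_eq_neg_hplus_neg_swap
  exact hswap ▸ (hf.neg.hplus_left ha).neg

theorem LipschitzOnWith.abs_hplus_sub_hplus_le (hf : LipschitzOnWith K f s) (ha : a ∈ s)
    (ha' : a' ∈ s) (hb : b ∈ s) (hb' : b' ∈ s) :
    |hplus f a b - hplus f a' b'| ≤ K * (|a - a'| + |b - b'|) := by
  have hleft := (hf.hplus_left hb).dist_le_mul a ha a' ha'
  have hright := (hf.hplus_right ha').dist_le_mul b hb b' hb'
  rw [Real.dist_eq, Real.dist_eq] at hleft hright
  calc |hplus f a b - hplus f a' b'|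
      ≤ |hplus f a b - hplus f a' b| + |hplus f a' b - hplus f a' b'| := abs_sub_le _ _ _
    _ ≤ K * |a - a'| + K * |b - b'| := add_le_add hleft hright
    _ = K * (|a - a'| + |b - b'|) := by ring

end Godunov

theorem stmt_8_general
    (f : ℝ → ℝ)
    (L : ℝ) (hL : 0 < L)
    (hlip : ∀ x ∈ Set.Icc (0:ℝ) 1, ∀ y ∈ Set.Icc (0:ℝ) 1, |f x - f y| ≤ L * |x - y|) :
    ∀ a a' b b' : ℝ, a ∈ Set.Icc (0:ℝ) 1 → a' ∈ Set.Icc (0:ℝ) 1 →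
      b ∈ Set.Icc (0:ℝ) 1 → b' ∈ Set.Icc (0:ℝ) 1 →
      |hplus f a b - hplus f a' b'| ≤ L * (|a - a'| + |b - b'|) ∧
      |hminus f a b - hminus f a' b'| ≤ L * (|a - a'| + |b - b'|) := by
  have hf : LipschitzOnWith ⟨L, hL.le⟩ f (Icc 0 1) :=
    LipschitzOnWith.of_dist_le_mul fun x hx y hy => by
      rw [Real.dist_eq, Real.dist_eq]
      exact hlip x hx y hy
  intro a a' b b' ha ha' hb hb'
  exact ⟨hf.abs_hplus_sub_hplus_le ha ha' hb hb', hf.neg.abs_hplus_sub_hplus_le ha ha' hb hb'⟩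

/-- Lipschitz continuity of the Godunov fluxes `h⁺` and `h⁻` with constant `L`. -/
theorem stmt_8
    (f : ℝ → ℝ)
    (hcont : ContinuousOn f (Set.Icc 0 1))
    (L : ℝ) (hL : 0 < L)
    (hlip : ∀ x ∈ Set.Icc (0:ℝ) 1, ∀ y ∈ Set.Icc (0:ℝ) 1, |f x - f y| ≤ L * |x - y|) :
    ∀ a a' b b' : ℝ, a ∈ Set.Icc (0:ℝ) 1 → a' ∈ Set.Icc (0:ℝ) 1 →
      b ∈ Set.Icc (0:ℝ) 1 → b' ∈ Set.Icc (0:ℝ) 1 →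
      |hplus f a b - hplus f a' b'| ≤ L * (|a - a'| + |b - b'|) ∧
      |hminus f a b - hminus f a' b'| ≤ L * (|a - a'| + |b - b'|) :=
  stmt_8_general f L hL hlip
end

section
/- Let f : [0,1] → ℝ be continuous, concave, Lipschitz with constant L > 0, with f(0) = 0 = f(1). Let k, h > 0, α ∈ ℝ and Δ_L, Δ_R satisfy the CFL condition k·max(L, |α|) ≤ h/2 and h ≤ Δ_L ≤ 2h, h ≤ Δ_R ≤ 2h. Then the interface marching operators H^{AB}_L(a,b,c) := (Δ_L b − k(h₀(b,c,α) − h⁻(a,b)))/(Δ_L + αk) and H^{AC}_R(a,b,c) := (Δ_R b − k(h⁺(b,c) − h₀(a,b,α)))/(Δ_R − αk) are nondecreasing in each of the three arguments a, b, c ∈ [0,1]. -/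
/-- Left interface marching operator (Cases A, B). -/
noncomputable def HABL (f : ℝ → ℝ) (α k ΔL a b c : ℝ) : ℝ :=
  (ΔL * b - k * (h0flux f b c α - hminus f a b)) / (ΔL + α * k)

/-- Right interface marching operator (Cases A, C). -/
noncomputable def HACR (f : ℝ → ℝ) (α k ΔR a b c : ℝ) : ℝ :=
  (ΔR * b - k * (hplus f b c - h0flux f a b α)) / (ΔR - α * k)

/-!
A continuous concave `f` on `[0,1]` is unimodal: for a maximiser `θ` it increases on `[0,θ]` and
decreases on `[θ,1]`, so `f x = min (f (min x θ)) (f (max x θ))`. This gives the closed forms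
`hplus f a b = min (f (min a θ)) (f (max b θ))` and `hminus f a b = -hplus f b a`, with the flux
monotone in its first argument and antitone in its second. The interface terms `max (β x - f x) 0`
are nondecreasing because `β x - f x` is convex and vanishes at `0`. So each numerator is monotone
in the outer arguments, and in the middle argument the fluxes decrease it by at most `k (|α| + L)`
per unit, which the CFL condition lets `Δ` absorb; CFL also keeps the denominators nonnegative.
-/

open Set

theorem hminus_eq_neg_hplus (f : ℝ → ℝ) (a b : ℝ) : hminus f a b = -hplus f b a := by
  have himage : ∀ s : Set ℝ, (fun x => -f x) '' s = -(f '' s) := fun s => by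
    rw [← image_neg_eq_neg, image_image]
  unfold hminus hplus
  rcases lt_trichotomy a b with hab | rfl | hab
  · rw [if_pos hab.le, if_neg (not_le.2 hab), himage, Real.sInf_neg]
  · simp only [le_refl, if_true, Icc_self, image_singleton, csInf_singleton]
  · rw [if_neg (not_le.2 hab), if_pos hab.le, himage, Real.sSup_neg]

theorem ConcaveOn.exists_monotoneOn_antitoneOn {f : ℝ → ℝ} {l r : ℝ} (hlr : l ≤ r)
    (hcont : ContinuousOn f (Icc l r)) (hconc : ConcaveOn ℝ (Icc l r) f) :
    ∃ θ ∈ Icc l r, MonotoneOn f (Icc l θ) ∧ AntitoneOn f (Icc θ r) := by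
  obtain ⟨θ, hθ, hmax⟩ := isCompact_Icc.exists_isMaxOn (nonempty_Icc.2 hlr) hcont
  refine ⟨θ, hθ, fun x hx y hy hxy => ?_, fun x hx y hy hxy => ?_⟩
  · have hx' : x ∈ Icc l r := ⟨hx.1, hx.2.trans hθ.2⟩
    have := hconc.min_le_of_mem_Icc hx' hθ ⟨hxy, hy.2⟩
    rwa [min_eq_left (hmax hx')] at this
  · have hy' : y ∈ Icc l r := ⟨hθ.1.trans hy.1, hy.2⟩
    have := hconc.min_le_of_mem_Icc hθ hy' ⟨hx.1, hxy⟩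
    rwa [min_eq_right (hmax hy')] at this

theorem ConcaveOn.monotoneOn_max_mul_sub {f : ℝ → ℝ} {r : ℝ} (hconc : ConcaveOn ℝ (Icc 0 r) f)
    (hf0 : f 0 = 0) (β : ℝ) : MonotoneOn (fun x => max (β * x - f x) 0) (Icc 0 r) := by
  intro x hx y hy hxy
  rcases hx.1.eq_or_lt with rfl | hx0
  · simp [hf0]
  have hy0 : 0 < y := hx0.trans_le hxy
  set t := x / y
  have ht : 0 ≤ t ∧ t ≤ 1 := ⟨div_nonneg hx.1 hy0.le, (div_le_one hy0).2 hxy⟩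
  have hconcave : t * f y ≤ f x := by
    have := hconc.2 ⟨le_rfl, hy.1.trans hy.2⟩ hy (sub_nonneg.2 ht.2) ht.1 (sub_add_cancel 1 t)
    simpa [hf0, t, div_mul_cancel₀ x hy0.ne'] using this
  have hscale : β * x - f x ≤ t * (β * y - f y) := by
    have : β * x = t * (β * y) := by rw [mul_left_comm, div_mul_cancel₀ x hy0.ne']
    rw [mul_sub]
    linarith
  refine max_le (hscale.trans ?_) (le_max_right _ _)
  calc t * (β * y - f y) ≤ t * max (β * y - f y) 0 :=
        mul_le_mul_of_nonneg_left (le_max_left _ _) ht.1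
    _ ≤ max (β * y - f y) 0 := mul_le_of_le_one_left (le_max_right _ _) ht.2

theorem monotoneOn_mul_sub_max_add_comp_min {f : ℝ → ℝ} {l r θ L : ℝ} (β : ℝ)
    (hθ : θ ∈ Icc l r) (hlip : ∀ x ∈ Icc l r, ∀ y ∈ Icc l r, |f x - f y| ≤ L * |x - y|) :
    MonotoneOn (fun x => (|β| + L) * x - (max (β * x - f x) 0 + f (min x θ))) (Icc l r) := by
  have hbounds : ∀ x ∈ Icc l r, ∀ y ∈ Icc l r, x ≤ y →
      |f y - f x| ≤ L * y - L * x ∧ β * y - β * x ≤ |β| * y - |β| * x ∧ |β| * x ≤ |β| * y :=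
    fun x hx y hy hxy =>
    ⟨by simpa [abs_of_nonneg (sub_nonneg.2 hxy), mul_sub] using hlip y hy x hx,
      by simpa only [mul_sub] using mul_le_mul_of_nonneg_right (le_abs_self β) (sub_nonneg.2 hxy),
      mul_le_mul_of_nonneg_left hxy (abs_nonneg β)⟩
  rw [← Icc_union_Icc_eq_Icc hθ.1 hθ.2]
  refine MonotoneOn.union_right ?_ ?_ (isGreatest_Icc hθ.1) (isLeast_Icc hθ.2)
  · intro x hx y hy hxy
    obtain ⟨hf, hβ, hβ'⟩ := hbounds x ⟨hx.1, hx.2.trans hθ.2⟩ y ⟨hy.1, hy.2.trans hθ.2⟩ hxy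
    rw [abs_le] at hf
    have hjump := max_sub_max_le_max (β * y - f y) 0 (β * x - f x) 0
    have hbound : max (β * y - f y - (β * x - f x)) (0 - 0) ≤
        |β| * y + L * y - (|β| * x + L * x) - (f y - f x) :=
      max_le (by linarith) (by linarith)
    simp only [add_mul, min_eq_left hx.2, min_eq_left hy.2]
    linarith
  · intro x hx y hy hxy
    obtain ⟨hf, hβ, hβ'⟩ := hbounds x ⟨hθ.1.trans hx.1, hx.2⟩ y ⟨hθ.1.trans hy.1, hy.2⟩ hxy
    rw [abs_le] at hf
    have hjump := max_sub_max_le_max (β * y - f y) 0 (β * x - f x) 0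
    have hbound : max (β * y - f y - (β * x - f x)) (0 - 0) ≤ |β| * y + L * y - (|β| * x + L * x) :=
      max_le (by linarith) (by linarith)
    simp only [add_mul, min_eq_right hx.1, min_eq_right hy.1]
    linarith

theorem monotoneOn_comp_min {f : ℝ → ℝ} {l θ : ℝ} (hlθ : l ≤ θ) (hmono : MonotoneOn f (Icc l θ)) :
    MonotoneOn (fun x => f (min x θ)) (Ici l) :=
  fun _ hx _ _ hxy => hmono ⟨le_min hx hlθ, min_le_right _ _⟩
    ⟨le_min (le_trans hx hxy) hlθ, min_le_right _ _⟩ (min_le_min_right θ hxy)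

theorem antitoneOn_comp_max {f : ℝ → ℝ} {r θ : ℝ} (hθr : θ ≤ r) (hanti : AntitoneOn f (Icc θ r)) :
    AntitoneOn (fun x => f (max x θ)) (Iic r) :=
  fun _ _ _ hy hxy => hanti ⟨le_max_right _ _, max_le (hxy.trans hy) hθr⟩
    ⟨le_max_right _ _, max_le hy hθr⟩ (max_le_max_right θ hxy)

section Unimodal

variable {f : ℝ → ℝ} {l r θ : ℝ} (hθ : θ ∈ Icc l r) (hmono : MonotoneOn f (Icc l θ))
  (hanti : AntitoneOn f (Icc θ r))
include hθ hmono hanti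

theorem apply_le_apply_of_unimodal {x : ℝ} (hx : x ∈ Icc l r) : f x ≤ f θ := by
  rcases le_total x θ with h | h
  · exact hmono ⟨hx.1, h⟩ ⟨hθ.1, le_rfl⟩ h
  · exact hanti ⟨le_rfl, hθ.2⟩ ⟨h, hx.2⟩ h

theorem apply_eq_min_comp_min_comp_max {x : ℝ} (hx : x ∈ Icc l r) :
    f x = min (f (min x θ)) (f (max x θ)) := by
  have := apply_le_apply_of_unimodal hθ hmono hanti hx
  rcases le_total x θ with h | h
  · rw [min_eq_left h, max_eq_right h, min_eq_left this]
  · rw [min_eq_right h, max_eq_left h, min_eq_right this]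

theorem hplus_eq_of_unimodal {a b : ℝ} (ha : a ∈ Icc l r) (hb : b ∈ Icc l r) :
    hplus f a b = min (f (min a θ)) (f (max b θ)) := by
  have hu := monotoneOn_comp_min hθ.1 hmono
  have hd := antitoneOn_comp_max hθ.2 hanti
  have hf := fun x (hx : x ∈ Icc l r) => apply_eq_min_comp_min_comp_max hθ hmono hanti hx
  unfold hplus
  split_ifs with hab
  · refine IsLeast.csInf_eq ⟨?_, ?_⟩
    · have : min (f a) (f b) = min (f (min a θ)) (f (max b θ)) := by
        refine le_antisymm ?_ ?_
        · rw [hf a ha, hf b hb]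
          exact min_le_min (min_le_left _ _) (min_le_right _ _)
        · refine le_min ?_ ?_
          · rw [hf a ha]
            exact min_le_min le_rfl (hd ha.2 hb.2 hab)
          · rw [hf b hb]
            exact min_le_min (hu ha.1 hb.1 hab) le_rfl
      rw [← this]
      rcases min_choice (f a) (f b) with h | h <;> rw [h]
      exacts [mem_image_of_mem f ⟨le_rfl, hab⟩, mem_image_of_mem f ⟨hab, le_rfl⟩]
    · rintro _ ⟨s, hs, rfl⟩
      rw [hf s ⟨ha.1.trans hs.1, hs.2.trans hb.2⟩]
      exact min_le_min (hu ha.1 (ha.1.trans hs.1) hs.1) (hd (hs.2.trans hb.2) hb.2 hs.2)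
  · rw [not_le] at hab
    refine IsGreatest.csSup_eq ⟨?_, ?_⟩
    · by_cases hbθ : b ≤ θ
      · rw [max_eq_right hbθ, min_eq_left (apply_le_apply_of_unimodal hθ hmono hanti
          ⟨le_min ha.1 hθ.1, (min_le_left _ _).trans ha.2⟩)]
        exact mem_image_of_mem f ⟨le_min hab.le hbθ, min_le_left _ _⟩
      · rw [not_le] at hbθ
        rw [min_eq_right (hbθ.trans hab).le, max_eq_left hbθ.le,
          min_eq_right (apply_le_apply_of_unimodal hθ hmono hanti hb)]
        exact mem_image_of_mem f ⟨le_rfl, hab.le⟩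
    · rintro _ ⟨s, hs, rfl⟩
      rw [hf s ⟨hb.1.trans hs.1, hs.2.trans ha.2⟩]
      exact min_le_min (hu (hb.1.trans hs.1) ha.1 hs.2) (hd hb.2 (hs.2.trans ha.2) hs.1)

theorem hminus_eq_of_unimodal {a b : ℝ} (ha : a ∈ Icc l r) (hb : b ∈ Icc l r) :
    hminus f a b = -min (f (min b θ)) (f (max a θ)) := by
  rw [hminus_eq_neg_hplus, hplus_eq_of_unimodal hθ hmono hanti hb ha]

end Unimodal

section MarchingOperators

variable {f : ℝ → ℝ} {θ L α k a a' b b' c c' : ℝ}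
  (hconc : ConcaveOn ℝ (Icc 0 1) f) (hf0 : f 0 = 0) (hθ : θ ∈ Icc 0 1)
  (hmono : MonotoneOn f (Icc 0 θ)) (hanti : AntitoneOn f (Icc θ 1))
  (hlip : ∀ x ∈ Icc (0:ℝ) 1, ∀ y ∈ Icc (0:ℝ) 1, |f x - f y| ≤ L * |x - y|) (hk : 0 ≤ k)
  (ha : a ∈ Icc 0 1) (ha' : a' ∈ Icc 0 1) (hb : b ∈ Icc 0 1) (hb' : b' ∈ Icc 0 1)
  (hc : c ∈ Icc 0 1) (hc' : c' ∈ Icc 0 1) (haa : a ≤ a') (hbb : b ≤ b') (hcc : c ≤ c')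
include hconc hf0 hθ hmono hanti hlip hk ha ha' hb hb' hc hc' haa hbb hcc

theorem HABL_le_HABL {ΔL : ℝ} (hΔ : k * (|α| + L) ≤ ΔL) (hden : 0 ≤ ΔL + α * k) :
    HABL f α k ΔL a b c ≤ HABL f α k ΔL a' b' c' := by
  refine div_le_div_of_nonneg_right ?_ hden
  rw [hminus_eq_of_unimodal hθ hmono hanti ha hb, hminus_eq_of_unimodal hθ hmono hanti ha' hb']
  unfold h0flux
  have hcflux := hconc.monotoneOn_max_mul_sub hf0 α hc hc' hcc
  have hbflux := monotoneOn_mul_sub_max_add_comp_min (-α) hθ hlip hb hb' hbb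
  have hu := monotoneOn_comp_min hθ.1 hmono hb.1 hb'.1 hbb
  have hd := antitoneOn_comp_max hθ.2 hanti ha.2 ha'.2 haa
  have hmin : min (f (min b' θ)) (f (max a' θ)) ≤
      min (f (min b θ)) (f (max a θ)) + (f (min b' θ) - f (min b θ)) := by
    rw [← min_add_add_right]
    exact min_le_min (by linarith) (by linarith)
  have hΔ' := mul_le_mul_of_nonneg_right hΔ (sub_nonneg.2 hbb)
  simp only [abs_neg] at hbflux
  linear_combination k * hcflux + k * hbflux + k * hmin + hΔ'

theorem HACR_le_HACR {ΔR : ℝ} (hΔ : k * (|α| + L) ≤ ΔR) (hden : 0 ≤ ΔR - α * k) :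
    HACR f α k ΔR a b c ≤ HACR f α k ΔR a' b' c' := by
  refine div_le_div_of_nonneg_right ?_ hden
  rw [hplus_eq_of_unimodal hθ hmono hanti hb hc, hplus_eq_of_unimodal hθ hmono hanti hb' hc']
  unfold h0flux
  have haflux := hconc.monotoneOn_max_mul_sub hf0 (-α) ha ha' haa
  have hbflux := monotoneOn_mul_sub_max_add_comp_min α hθ hlip hb hb' hbb
  have hu := monotoneOn_comp_min hθ.1 hmono hb.1 hb'.1 hbb
  have hd := antitoneOn_comp_max hθ.2 hanti hc.2 hc'.2 hcc
  have hmin : min (f (min b' θ)) (f (max c' θ)) ≤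
      min (f (min b θ)) (f (max c θ)) + (f (min b' θ) - f (min b θ)) := by
    rw [← min_add_add_right]
    exact min_le_min (by linarith) (by linarith)
  have hΔ' := mul_le_mul_of_nonneg_right hΔ (sub_nonneg.2 hbb)
  linear_combination k * haflux + k * hbflux + k * hmin + hΔ'

end MarchingOperators

theorem stmt_12_general
    (f : ℝ → ℝ)
    (hcont : ContinuousOn f (Set.Icc 0 1))
    (hconc : ConcaveOn ℝ (Set.Icc 0 1) f)
    (L : ℝ)
    (hlip : ∀ x ∈ Set.Icc (0:ℝ) 1, ∀ y ∈ Set.Icc (0:ℝ) 1, |f x - f y| ≤ L * |x - y|)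
    (hf0 : f 0 = 0)
    (k h α ΔL ΔR : ℝ) (hk : 0 < k)
    (hCFL : k * max L |α| ≤ h / 2)
    (hΔL : h ≤ ΔL ∧ ΔL ≤ 2 * h) (hΔR : h ≤ ΔR ∧ ΔR ≤ 2 * h) :
    ∀ a a' b b' c c' : ℝ,
      a ∈ Set.Icc (0:ℝ) 1 → a' ∈ Set.Icc (0:ℝ) 1 →
      b ∈ Set.Icc (0:ℝ) 1 → b' ∈ Set.Icc (0:ℝ) 1 →
      c ∈ Set.Icc (0:ℝ) 1 → c' ∈ Set.Icc (0:ℝ) 1 →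
      a ≤ a' → b ≤ b' → c ≤ c' →
      HABL f α k ΔL a b c ≤ HABL f α k ΔL a' b' c' ∧
      HACR f α k ΔR a b c ≤ HACR f α k ΔR a' b' c' := by
  obtain ⟨θ, hθ, hmono, hanti⟩ := hconc.exists_monotoneOn_antitoneOn zero_le_one hcont
  have hkα : k * |α| ≤ h / 2 := (mul_le_mul_of_nonneg_left (le_max_right L |α|) hk.le).trans hCFL
  have hkL : k * L ≤ h / 2 := (mul_le_mul_of_nonneg_left (le_max_left L |α|) hk.le).trans hCFL
  have hαk : -(k * |α|) ≤ α * k ∧ α * k ≤ k * |α| :=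
    abs_le.1 (by rw [abs_mul, abs_of_pos hk, mul_comm])
  have hkα0 : 0 ≤ k * |α| := mul_nonneg hk.le (abs_nonneg α)
  intro a a' b b' c c' ha ha' hb hb' hc hc' haa hbb hcc
  exact ⟨HABL_le_HABL hconc hf0 hθ hmono hanti hlip hk.le ha ha' hb hb' hc hc' haa hbb hcc
      (by linarith [mul_add k |α| L]) (by linarith),
    HACR_le_HACR hconc hf0 hθ hmono hanti hlip hk.le ha ha' hb hb' hc hc' haa hbb hcc
      (by linarith [mul_add k |α| L]) (by linarith)⟩

/-- Under the CFL condition, the interface marching operators `H^{AB}_L` and `H^{AC}_R`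
are nondecreasing in each of their three arguments. -/
theorem stmt_12
    (f : ℝ → ℝ)
    (hcont : ContinuousOn f (Set.Icc 0 1))
    (hconc : ConcaveOn ℝ (Set.Icc 0 1) f)
    (L : ℝ) (hL : 0 < L)
    (hlip : ∀ x ∈ Set.Icc (0:ℝ) 1, ∀ y ∈ Set.Icc (0:ℝ) 1, |f x - f y| ≤ L * |x - y|)
    (hf0 : f 0 = 0) (hf1 : f 1 = 0)
    (k h α ΔL ΔR : ℝ) (hk : 0 < k) (hh : 0 < h)
    (hCFL : k * max L |α| ≤ h / 2)
    (hΔL : h ≤ ΔL ∧ ΔL ≤ 2 * h) (hΔR : h ≤ ΔR ∧ ΔR ≤ 2 * h) :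
    ∀ a a' b b' c c' : ℝ,
      a ∈ Set.Icc (0:ℝ) 1 → a' ∈ Set.Icc (0:ℝ) 1 →
      b ∈ Set.Icc (0:ℝ) 1 → b' ∈ Set.Icc (0:ℝ) 1 →
      c ∈ Set.Icc (0:ℝ) 1 → c' ∈ Set.Icc (0:ℝ) 1 →
      a ≤ a' → b ≤ b' → c ≤ c' →
      HABL f α k ΔL a b c ≤ HABL f α k ΔL a' b' c' ∧
      HACR f α k ΔR a b c ≤ HACR f α k ΔR a' b' c' :=
  stmt_12_general f hcont hconc L hlip hf0 k h α ΔL ΔR hk hCFL hΔL hΔR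
end

section
/- Let f : [0,1] → ℝ be continuous with f ≥ 0 on [0,1] and f(0) = 0, let α ∈ ℝ, k, h > 0 and Δ_L, Δ_R with Δ_L + αk > 0, Δ_R − αk > 0, Δ_L + h + αk > 0 and Δ_R + h − αk > 0. Then for every b ∈ [0,1]: H^±(b,b,b) = b; H^{AB}_L(b,b,b) = b − (k/(Δ_L + αk))·R_L(b,α); H^C_L(b,b,b,b) = b − (k/(Δ_L + h + αk))·R_L(b,α); H^{AC}_R(b,b,b) = b − (k/(Δ_R − αk))·R_R(b,α); and H^B_R(b,b,b,b) = b − (k/(Δ_R + h − αk))·R_R(b,α). -/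
/-- Left remainder term `R_L`. -/
noncomputable def RL (f : ℝ → ℝ) (b α : ℝ) : ℝ :=
  min (max (α * b + f b) 0) (2 * f b)

/-- Right remainder term `R_R`. -/
noncomputable def RR (f : ℝ → ℝ) (b α : ℝ) : ℝ :=
  2 * f b - RL f b α

/-- Godunov marching operator for the flux `+f`. -/
noncomputable def Hplus (f : ℝ → ℝ) (k h a b c : ℝ) : ℝ :=
  b - (k / h) * (hplus f b c - hplus f a b)

/-- Godunov marching operator for the flux `−f`. -/
noncomputable def Hminus (f : ℝ → ℝ) (k h a b c : ℝ) : ℝ :=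
  b - (k / h) * (hminus f b c - hminus f a b)

/-- Left interface marching operator (Case C). -/
noncomputable def HCL (f : ℝ → ℝ) (α k h ΔL a b c d : ℝ) : ℝ :=
  (ΔL * b + h * c - k * (h0flux f c d α - hminus f a b)) / (ΔL + h + α * k)

/-- Right interface marching operator (Case B). -/
noncomputable def HBR (f : ℝ → ℝ) (α k h ΔR a b c d : ℝ) : ℝ :=
  (ΔR * b + h * c - k * (hplus f c d - h0flux f a b α)) / (ΔR + h - α * k)

/-! On a constant state every Godunov flux collapses to `±f b`, so the interior schemes leave
`b` fixed. At the interface, `h₀(b,b,α) + f b + α b = R_L(b,α)`: comparing `α b` with `±f b`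
gives three cases, in which both sides are `0`, `α b + f b` and `2 f b`. The interface
operators then differ from `b` by exactly the remainder term over their denominator. -/

lemma sub_max_add_max_eq_min_max {A F : ℝ} (hF : 0 ≤ F) :
    A + F - max (A - F) 0 + max (-A - F) 0 = min (max (A + F) 0) (2 * F) := by
  rcases le_total A (-F) with hA | hA
  · rw [max_eq_right (by linarith), max_eq_left (by linarith), max_eq_right (by linarith),
      min_eq_left (by linarith)]
    ring
  rcases le_total A F with hA' | hA'
  · rw [max_eq_right (by linarith), max_eq_right (by linarith), max_eq_left (by linarith),
      min_eq_left (by linarith)]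
    ring
  · rw [max_eq_left (by linarith), max_eq_right (by linarith), max_eq_left (by linarith),
      min_eq_right (by linarith)]
    ring

lemma hplus_self (f : ℝ → ℝ) (b : ℝ) : hplus f b b = f b := by
  simp [hplus]

lemma hminus_self (f : ℝ → ℝ) (b : ℝ) : hminus f b b = -f b := by
  simp [hminus]

lemma Hplus_self (f : ℝ → ℝ) (k h b : ℝ) : Hplus f k h b b b = b := by
  simp [Hplus]

lemma Hminus_self (f : ℝ → ℝ) (k h b : ℝ) : Hminus f k h b b b = b := by
  simp [Hminus]

lemma h0flux_self_sub_hminus_self {f : ℝ → ℝ} {b : ℝ} (hfb : 0 ≤ f b) (α : ℝ) :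
    h0flux f b b α - hminus f b b = RL f b α - α * b := by
  rw [RL, ← sub_max_add_max_eq_min_max hfb, h0flux, hminus_self]
  ring_nf

lemma hplus_self_sub_h0flux_self {f : ℝ → ℝ} {b : ℝ} (hfb : 0 ≤ f b) (α : ℝ) :
    hplus f b b - h0flux f b b α = RR f b α + α * b := by
  rw [RR, RL, ← sub_max_add_max_eq_min_max hfb, h0flux, hplus_self]
  ring_nf

lemma div_add_mul_eq_sub {Δ α k b R : ℝ} (hΔ : Δ + α * k ≠ 0) :
    (Δ * b - k * (R - α * b)) / (Δ + α * k) = b - k / (Δ + α * k) * R := by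
  rw [eq_sub_iff_add_eq, div_mul_eq_mul_div, ← add_div, div_eq_iff hΔ]
  ring

lemma div_sub_mul_eq_sub {Δ α k b R : ℝ} (hΔ : Δ - α * k ≠ 0) :
    (Δ * b - k * (R + α * b)) / (Δ - α * k) = b - k / (Δ - α * k) * R := by
  rw [eq_sub_iff_add_eq, div_mul_eq_mul_div, ← add_div, div_eq_iff hΔ]
  ring

theorem stmt_14_general
    (f : ℝ → ℝ)
    (hf : ∀ x ∈ Set.Icc (0:ℝ) 1, 0 ≤ f x)
    (α k h ΔL ΔR : ℝ)
    (hL1 : 0 < ΔL + α * k) (hR1 : 0 < ΔR - α * k)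
    (hL2 : 0 < ΔL + h + α * k) (hR2 : 0 < ΔR + h - α * k)
    (b : ℝ) (hb : b ∈ Set.Icc (0:ℝ) 1) :
    Hplus f k h b b b = b ∧
    Hminus f k h b b b = b ∧
    HABL f α k ΔL b b b = b - (k / (ΔL + α * k)) * RL f b α ∧
    HCL f α k h ΔL b b b b = b - (k / (ΔL + h + α * k)) * RL f b α ∧
    HACR f α k ΔR b b b = b - (k / (ΔR - α * k)) * RR f b α ∧
    HBR f α k h ΔR b b b b = b - (k / (ΔR + h - α * k)) * RR f b α := by
  have hfb := hf b hb
  refine ⟨Hplus_self f k h b, Hminus_self f k h b, ?_, ?_, ?_, ?_⟩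
  · rw [HABL, h0flux_self_sub_hminus_self hfb]
    exact div_add_mul_eq_sub hL1.ne'
  · rw [HCL, h0flux_self_sub_hminus_self hfb, ← add_mul]
    exact div_add_mul_eq_sub hL2.ne'
  · rw [HACR, hplus_self_sub_h0flux_self hfb]
    exact div_sub_mul_eq_sub hR1.ne'
  · rw [HBR, hplus_self_sub_h0flux_self hfb, ← add_mul]
    exact div_sub_mul_eq_sub hR2.ne'

/-- Values of the marching operators on constant states, in terms of the remainder
terms `R_L` and `R_R`. -/
theorem stmt_14
    (f : ℝ → ℝ)
    (hcont : ContinuousOn f (Set.Icc 0 1))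
    (hf : ∀ x ∈ Set.Icc (0:ℝ) 1, 0 ≤ f x) (hf0 : f 0 = 0)
    (α k h ΔL ΔR : ℝ) (hk : 0 < k) (hh : 0 < h)
    (hL1 : 0 < ΔL + α * k) (hR1 : 0 < ΔR - α * k)
    (hL2 : 0 < ΔL + h + α * k) (hR2 : 0 < ΔR + h - α * k)
    (b : ℝ) (hb : b ∈ Set.Icc (0:ℝ) 1) :
    Hplus f k h b b b = b ∧
    Hminus f k h b b b = b ∧
    HABL f α k ΔL b b b = b - (k / (ΔL + α * k)) * RL f b α ∧
    HCL f α k h ΔL b b b b = b - (k / (ΔL + h + α * k)) * RL f b α ∧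
    HACR f α k ΔR b b b = b - (k / (ΔR - α * k)) * RR f b α ∧
    HBR f α k h ΔR b b b b = b - (k / (ΔR + h - α * k)) * RR f b α :=
  stmt_14_general f hf α k h ΔL ΔR hL1 hR1 hL2 hR2 b hb
end

section
/- Let f : [0,1] → ℝ be continuous, concave, Lipschitz with constant L > 0, with f(0) = 0 = f(1). Let k, h > 0, α ∈ ℝ and Δ_L, Δ_R satisfy the CFL condition k·max(L, |α|) ≤ h/2 and h ≤ Δ_L ≤ 2h, h ≤ Δ_R ≤ 2h. Let M ∈ [0,1]. If a, b, c ∈ [0, M], then H^±(a,b,c) ∈ [0, M], H^{AB}_L(a,b,c) ∈ [0, M] and H^{AC}_R(a,b,c) ∈ [0, M]; if a, b, c, d ∈ [0, M], then H^C_L(a,b,c,d) ∈ [0, M] and H^B_R(a,b,c,d) ∈ [0, M]. Consequently the finite volume approximations remain in [0, ‖ρ₀‖_∞] for all times (uniform L^∞ bound). -/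
open Set

variable {f g : ℝ → ℝ} {L k h α Δ M a b c d : ℝ}

lemma abs_sub_le_mul_of_mem_Icc (hL : 0 ≤ L)
    (hlip : ∀ x ∈ Icc (0:ℝ) 1, ∀ y ∈ Icc (0:ℝ) 1, |g x - g y| ≤ L * |x - y|)
    {x y : ℝ} (ha : 0 ≤ a) (hb : b ≤ 1) (hx : x ∈ Icc a b) (hy : y ∈ Icc a b) :
    |g x - g y| ≤ L * (b - a) :=
  (hlip x ⟨ha.trans hx.1, hx.2.trans hb⟩ y ⟨ha.trans hy.1, hy.2.trans hb⟩).trans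
    (mul_le_mul_of_nonneg_left (abs_sub_le_of_le_of_le hx.1 hx.2 hy.1 hy.2) hL)

lemma csInf_image_mem_Icc {ι β : Type*} [ConditionallyCompleteLattice β] {s : Set ι}
    {u : ι → β} {i : ι} {m : β} (hi : i ∈ s) (hm : ∀ j ∈ s, m ≤ u j) :
    sInf (u '' s) ∈ Icc m (u i) :=
  ⟨le_csInf ⟨u i, mem_image_of_mem u hi⟩ (forall_mem_image.2 hm),
    csInf_le ⟨m, forall_mem_image.2 hm⟩ (mem_image_of_mem u hi)⟩

lemma csSup_image_mem_Icc {ι β : Type*} [ConditionallyCompleteLattice β] {s : Set ι}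
    {u : ι → β} {i : ι} {m : β} (hi : i ∈ s) (hm : ∀ j ∈ s, u j ≤ m) :
    sSup (u '' s) ∈ Icc (u i) m :=
  ⟨le_csSup ⟨m, forall_mem_image.2 hm⟩ (mem_image_of_mem u hi),
    csSup_le ⟨u i, mem_image_of_mem u hi⟩ (forall_mem_image.2 hm)⟩

lemma hplus_mem_Icc (hL : 0 ≤ L)
    (hlip : ∀ x ∈ Icc (0:ℝ) 1, ∀ y ∈ Icc (0:ℝ) 1, |g x - g y| ≤ L * |x - y|)
    (ha : a ∈ Icc (0:ℝ) 1) (hb : b ∈ Icc (0:ℝ) 1) {x : ℝ} (hx : x = a ∨ x = b) :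
    hplus g a b ∈ Icc (g x - L * max (b - a) 0) (g x + L * max (a - b) 0) := by
  unfold hplus
  split_ifs with hab
  · rw [max_eq_left (sub_nonneg.2 hab), max_eq_right (sub_nonpos.2 hab), mul_zero, add_zero]
    have hxI : x ∈ Icc a b := by rcases hx with rfl | rfl <;> simp [hab]
    refine csInf_image_mem_Icc hxI fun y hy => ?_
    linarith [abs_le.1 (abs_sub_le_mul_of_mem_Icc hL hlip ha.1 hb.2 hxI hy)]
  · rw [not_le] at hab
    rw [max_eq_right (sub_nonpos.2 hab.le), max_eq_left (sub_nonneg.2 hab.le), mul_zero,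
      sub_zero]
    have hxI : x ∈ Icc b a := by rcases hx with rfl | rfl <;> simp [hab.le]
    refine csSup_image_mem_Icc hxI fun y hy => ?_
    linarith [abs_le.1 (abs_sub_le_mul_of_mem_Icc hL hlip hb.1 ha.2 hxI hy)]

lemma hplus_mem_Icc_right (hL : 0 ≤ L)
    (hlip : ∀ x ∈ Icc (0:ℝ) 1, ∀ y ∈ Icc (0:ℝ) 1, |g x - g y| ≤ L * |x - y|)
    (hM : M ≤ 1) (ha : a ∈ Icc 0 M) (hb : b ∈ Icc 0 M) :
    hplus g a b ∈ Icc (g b - L * b) (g b + L * (M - b)) := by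
  obtain ⟨hlo, hhi⟩ := hplus_mem_Icc hL hlip ⟨ha.1, ha.2.trans hM⟩ ⟨hb.1, hb.2.trans hM⟩
    (Or.inr rfl)
  have h₁ : max (b - a) 0 ≤ b := max_le (by linarith [ha.1]) hb.1
  have h₂ : max (a - b) 0 ≤ M - b := max_le (by linarith [ha.2]) (by linarith [hb.2])
  exact ⟨by linarith [mul_le_mul_of_nonneg_left h₁ hL],
    by linarith [mul_le_mul_of_nonneg_left h₂ hL]⟩

lemma hplus_mem_Icc_left (hL : 0 ≤ L)
    (hlip : ∀ x ∈ Icc (0:ℝ) 1, ∀ y ∈ Icc (0:ℝ) 1, |g x - g y| ≤ L * |x - y|)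
    (hM : M ≤ 1) (hb : b ∈ Icc 0 M) (hc : c ∈ Icc 0 M) :
    hplus g b c ∈ Icc (g b - L * (M - b)) (g b + L * b) := by
  obtain ⟨hlo, hhi⟩ := hplus_mem_Icc hL hlip ⟨hb.1, hb.2.trans hM⟩ ⟨hc.1, hc.2.trans hM⟩
    (Or.inl rfl)
  have h₁ : max (c - b) 0 ≤ M - b := max_le (by linarith [hc.2]) (by linarith [hb.2])
  have h₂ : max (b - c) 0 ≤ b := max_le (by linarith [hc.1]) hb.1
  exact ⟨by linarith [mul_le_mul_of_nonneg_left h₁ hL],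
    by linarith [mul_le_mul_of_nonneg_left h₂ hL]⟩

lemma lipschitz_neg
    (hlip : ∀ x ∈ Icc (0:ℝ) 1, ∀ y ∈ Icc (0:ℝ) 1, |f x - f y| ≤ L * |x - y|) :
    ∀ x ∈ Icc (0:ℝ) 1, ∀ y ∈ Icc (0:ℝ) 1, |-f x - -f y| ≤ L * |x - y| := by
  intro x hx y hy
  rw [neg_sub_neg, abs_sub_comm]
  exact hlip x hx y hy

lemma hminus_mem_Icc_right (hL : 0 ≤ L)
    (hlip : ∀ x ∈ Icc (0:ℝ) 1, ∀ y ∈ Icc (0:ℝ) 1, |f x - f y| ≤ L * |x - y|)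
    (hM : M ≤ 1) (ha : a ∈ Icc 0 M) (hb : b ∈ Icc 0 M) :
    hminus f a b ∈ Icc (-f b - L * b) (-f b + L * (M - b)) :=
  hplus_mem_Icc_right hL (lipschitz_neg hlip) hM ha hb

lemma Hplus_mem_Icc (hL : 0 ≤ L)
    (hlip : ∀ x ∈ Icc (0:ℝ) 1, ∀ y ∈ Icc (0:ℝ) 1, |g x - g y| ≤ L * |x - y|)
    (hk : 0 ≤ k) (hh : 0 < h) (hkL : k * L ≤ h / 2) (hM : M ≤ 1)
    (ha : a ∈ Icc 0 M) (hb : b ∈ Icc 0 M) (hc : c ∈ Icc 0 M) :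
    Hplus g k h a b c ∈ Icc 0 M := by
  obtain ⟨hXlo, hXhi⟩ := hplus_mem_Icc_left hL hlip hM hb hc
  obtain ⟨hYlo, hYhi⟩ := hplus_mem_Icc_right hL hlip hM ha hb
  have hr : 0 ≤ k / h := div_nonneg hk hh.le
  have hrL : k / h * L ≤ 1 / 2 := by
    rw [div_mul_eq_mul_div, div_le_iff₀ hh]
    linarith
  have hMb : 0 ≤ M - b := sub_nonneg.2 hb.2
  rw [Hplus, mem_Icc]
  constructor
  · linarith [mul_le_mul_of_nonneg_left
      (show hplus g b c - hplus g a b ≤ 2 * L * b by linarith) hr,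
      mul_le_mul_of_nonneg_right hrL hb.1]
  · linarith [mul_le_mul_of_nonneg_left
      (show hplus g a b - hplus g b c ≤ 2 * L * (M - b) by linarith) hr,
      mul_le_mul_of_nonneg_right hrL hMb]

lemma h0flux_add_le (hb : 0 ≤ b) (hfb : f b ≤ L * b) :
    h0flux f b c α + f b ≤ max L |α| * b := by
  have hαb : -α * b ≤ max L |α| * b :=
    mul_le_mul_of_nonneg_right ((neg_le_abs α).trans (le_max_right _ _)) hb
  have hLb : L * b ≤ max L |α| * b := mul_le_mul_of_nonneg_right (le_max_left _ _) hb
  have hout : -max (α * c - f c) 0 ≤ 0 := neg_nonpos.2 (le_max_right _ _)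
  have hin : max (-α * b - f b) 0 ≤ max L |α| * b - f b :=
    max_le (by linarith) (by linarith)
  rw [h0flux]
  linarith

lemma neg_mul_le_h0flux_add (hb : b ≤ M) (hc : c ∈ Icc 0 M) (hfb : 0 ≤ f b)
    (hfc : 0 ≤ f c) : -(max L |α| * (M - b)) ≤ α * M + h0flux f b c α + f b := by
  have hMb : 0 ≤ M - b := sub_nonneg.2 hb
  have hin : -α * b - f b ≤ max (-α * b - f b) 0 := le_max_left _ _
  have hin₀ : 0 ≤ max (-α * b - f b) 0 := le_max_right _ _
  rw [h0flux]
  rcases le_total 0 α with hα | hα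
  · have hout : max (α * c - f c) 0 ≤ α * M :=
      max_le (by linarith [mul_le_mul_of_nonneg_left hc.2 hα]) (mul_nonneg hα (hc.1.trans hc.2))
    linarith [mul_nonneg ((abs_nonneg α).trans (le_max_right L |α|)) hMb]
  · have hout : max (α * c - f c) 0 = 0 :=
      max_eq_right (by linarith [mul_nonpos_of_nonpos_of_nonneg hα hc.1])
    have hαK : -(max L |α|) ≤ α := by linarith [neg_abs_le α, le_max_right L |α|]
    rw [hout]
    linarith [mul_le_mul_of_nonneg_right hαK hMb]

lemma h0flux_swap : h0flux f b a (-α) = -h0flux f a b α := by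
  simp only [h0flux, neg_neg]
  ring

lemma neg_mul_le_h0flux_sub (hb : 0 ≤ b) (hfb : f b ≤ L * b) :
    -(max L |α| * b) ≤ h0flux f a b α - f b := by
  have := h0flux_add_le (c := a) (α := -α) hb hfb
  rw [h0flux_swap, abs_neg] at this
  linarith

lemma h0flux_sub_add_le (hb : b ≤ M) (ha : a ∈ Icc 0 M) (hfb : 0 ≤ f b) (hfa : 0 ≤ f a) :
    h0flux f a b α - f b + α * M ≤ max L |α| * (M - b) := by
  have := neg_mul_le_h0flux_add (L := L) (α := -α) hb ha hfb hfa
  rw [h0flux_swap, abs_neg] at this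
  linarith

lemma mul_le_half_of_cfl (hk : 0 ≤ k) (hCFL : k * max L |α| ≤ h / 2) : k * L ≤ h / 2 :=
  (mul_le_mul_of_nonneg_left (le_max_left _ _) hk).trans hCFL

lemma abs_mul_le_half_of_cfl (hk : 0 ≤ k) (hCFL : k * max L |α| ≤ h / 2) :
    |α * k| ≤ h / 2 := by
  rw [abs_mul, abs_of_nonneg hk, mul_comm]
  exact (mul_le_mul_of_nonneg_left (le_max_right _ _) hk).trans hCFL

lemma abs_sub_le_mul_sub_add_sub (hL : 0 ≤ L)
    (hlip : ∀ x ∈ Icc (0:ℝ) 1, ∀ y ∈ Icc (0:ℝ) 1, |g x - g y| ≤ L * |x - y|)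
    (hM : M ≤ 1) (hb : b ∈ Icc 0 M) (hc : c ∈ Icc 0 M) :
    |g b - g c| ≤ L * ((M - b) + (M - c)) :=
  (hlip b ⟨hb.1, hb.2.trans hM⟩ c ⟨hc.1, hc.2.trans hM⟩).trans <|
    mul_le_mul_of_nonneg_left (abs_sub_le_iff.2 ⟨by linarith [hb.2, hc.2], by linarith [hb.2, hc.2]⟩) hL

lemma HABL_mem_Icc (hL : 0 ≤ L)
    (hlip : ∀ x ∈ Icc (0:ℝ) 1, ∀ y ∈ Icc (0:ℝ) 1, |f x - f y| ≤ L * |x - y|)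
    (hfnn : ∀ x ∈ Icc (0:ℝ) 1, 0 ≤ f x) (hfL : ∀ x ∈ Icc (0:ℝ) 1, f x ≤ L * x)
    (hk : 0 ≤ k) (hh : 0 < h) (hCFL : k * max L |α| ≤ h / 2) (hΔ : h ≤ Δ) (hM : M ≤ 1)
    (ha : a ∈ Icc 0 M) (hb : b ∈ Icc 0 M) (hc : c ∈ Icc 0 M) :
    HABL f α k Δ a b c ∈ Icc 0 M := by
  have hb₁ : b ∈ Icc (0:ℝ) 1 := ⟨hb.1, hb.2.trans hM⟩
  have hc₁ : c ∈ Icc (0:ℝ) 1 := ⟨hc.1, hc.2.trans hM⟩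
  have hMb : 0 ≤ M - b := sub_nonneg.2 hb.2
  have hkL := mul_le_half_of_cfl hk hCFL
  have hD : 0 < Δ + α * k := by
    linarith [neg_abs_le (α * k), abs_mul_le_half_of_cfl hk hCFL]
  obtain ⟨hQlo, hQhi⟩ := hminus_mem_Icc_right hL hlip hM ha hb
  have hout := h0flux_add_le (c := c) (α := α) hb.1 (hfL b hb₁)
  have hin := neg_mul_le_h0flux_add (L := L) (α := α) hb.2 hc (hfnn b hb₁) (hfnn c hc₁)
  rw [HABL, mem_Icc, div_le_iff₀ hD]
  refine ⟨div_nonneg ?_ hD.le, ?_⟩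
  · linarith [mul_le_mul_of_nonneg_left hQlo hk, mul_le_mul_of_nonneg_left hout hk,
      mul_le_mul_of_nonneg_right hCFL hb.1, mul_le_mul_of_nonneg_right hkL hb.1,
      mul_le_mul_of_nonneg_right hΔ hb.1]
  · linarith [mul_le_mul_of_nonneg_left hQhi hk, mul_le_mul_of_nonneg_left hin hk,
      mul_le_mul_of_nonneg_right hCFL hMb, mul_le_mul_of_nonneg_right hkL hMb,
      mul_le_mul_of_nonneg_right hΔ hMb]

lemma HACR_mem_Icc (hL : 0 ≤ L)
    (hlip : ∀ x ∈ Icc (0:ℝ) 1, ∀ y ∈ Icc (0:ℝ) 1, |f x - f y| ≤ L * |x - y|)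
    (hfnn : ∀ x ∈ Icc (0:ℝ) 1, 0 ≤ f x) (hfL : ∀ x ∈ Icc (0:ℝ) 1, f x ≤ L * x)
    (hk : 0 ≤ k) (hh : 0 < h) (hCFL : k * max L |α| ≤ h / 2) (hΔ : h ≤ Δ) (hM : M ≤ 1)
    (ha : a ∈ Icc 0 M) (hb : b ∈ Icc 0 M) (hc : c ∈ Icc 0 M) :
    HACR f α k Δ a b c ∈ Icc 0 M := by
  have ha₁ : a ∈ Icc (0:ℝ) 1 := ⟨ha.1, ha.2.trans hM⟩
  have hb₁ : b ∈ Icc (0:ℝ) 1 := ⟨hb.1, hb.2.trans hM⟩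
  have hMb : 0 ≤ M - b := sub_nonneg.2 hb.2
  have hkL := mul_le_half_of_cfl hk hCFL
  have hD : 0 < Δ - α * k := by
    linarith [le_abs_self (α * k), abs_mul_le_half_of_cfl hk hCFL]
  obtain ⟨hXlo, hXhi⟩ := hplus_mem_Icc_left hL hlip hM hb hc
  have hin := neg_mul_le_h0flux_sub (a := a) (α := α) hb.1 (hfL b hb₁)
  have hout := h0flux_sub_add_le (L := L) (α := α) hb.2 ha (hfnn b hb₁) (hfnn a ha₁)
  rw [HACR, mem_Icc, div_le_iff₀ hD]
  refine ⟨div_nonneg ?_ hD.le, ?_⟩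
  · linarith [mul_le_mul_of_nonneg_left hXhi hk, mul_le_mul_of_nonneg_left hin hk,
      mul_le_mul_of_nonneg_right hCFL hb.1, mul_le_mul_of_nonneg_right hkL hb.1,
      mul_le_mul_of_nonneg_right hΔ hb.1]
  · linarith [mul_le_mul_of_nonneg_left hXlo hk, mul_le_mul_of_nonneg_left hout hk,
      mul_le_mul_of_nonneg_right hCFL hMb, mul_le_mul_of_nonneg_right hkL hMb,
      mul_le_mul_of_nonneg_right hΔ hMb]

lemma HCL_mem_Icc (hL : 0 ≤ L)
    (hlip : ∀ x ∈ Icc (0:ℝ) 1, ∀ y ∈ Icc (0:ℝ) 1, |f x - f y| ≤ L * |x - y|)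
    (hfnn : ∀ x ∈ Icc (0:ℝ) 1, 0 ≤ f x) (hfL : ∀ x ∈ Icc (0:ℝ) 1, f x ≤ L * x)
    (hk : 0 ≤ k) (hh : 0 < h) (hCFL : k * max L |α| ≤ h / 2) (hΔ : h ≤ Δ) (hM : M ≤ 1)
    (ha : a ∈ Icc 0 M) (hb : b ∈ Icc 0 M) (hc : c ∈ Icc 0 M) (hd : d ∈ Icc 0 M) :
    HCL f α k h Δ a b c d ∈ Icc 0 M := by
  have hb₁ : b ∈ Icc (0:ℝ) 1 := ⟨hb.1, hb.2.trans hM⟩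
  have hc₁ : c ∈ Icc (0:ℝ) 1 := ⟨hc.1, hc.2.trans hM⟩
  have hd₁ : d ∈ Icc (0:ℝ) 1 := ⟨hd.1, hd.2.trans hM⟩
  have hMb : 0 ≤ M - b := sub_nonneg.2 hb.2
  have hMc : 0 ≤ M - c := sub_nonneg.2 hc.2
  have hkL := mul_le_half_of_cfl hk hCFL
  have hD : 0 < Δ + h + α * k := by
    linarith [neg_abs_le (α * k), abs_mul_le_half_of_cfl hk hCFL]
  obtain ⟨hQlo, hQhi⟩ := hminus_mem_Icc_right hL hlip hM ha hb
  have hout := h0flux_add_le (c := d) (α := α) hc.1 (hfL c hc₁)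
  have hin := neg_mul_le_h0flux_add (L := L) (α := α) hc.2 hd (hfnn c hc₁) (hfnn d hd₁)
  have hbc := abs_le.1 (abs_sub_le_mul_sub_add_sub hL hlip hM hb hc)
  rw [HCL, mem_Icc, div_le_iff₀ hD]
  refine ⟨div_nonneg ?_ hD.le, ?_⟩
  · linarith [mul_le_mul_of_nonneg_left hQlo hk, mul_le_mul_of_nonneg_left hout hk,
      mul_le_mul_of_nonneg_left (hfL b hb₁) hk, mul_nonneg hk (hfnn c hc₁),
      mul_le_mul_of_nonneg_right hCFL hc.1, mul_le_mul_of_nonneg_right hkL hb.1,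
      mul_le_mul_of_nonneg_right hΔ hb.1, mul_nonneg hh.le hc.1]
  · linarith [mul_le_mul_of_nonneg_left hQhi hk, mul_le_mul_of_nonneg_left hin hk,
      mul_le_mul_of_nonneg_left hbc.1 hk, mul_le_mul_of_nonneg_right hCFL hMc,
      mul_le_mul_of_nonneg_right hkL hMc, mul_le_mul_of_nonneg_right hkL hMb,
      mul_le_mul_of_nonneg_right hΔ hMb]

lemma HBR_mem_Icc (hL : 0 ≤ L)
    (hlip : ∀ x ∈ Icc (0:ℝ) 1, ∀ y ∈ Icc (0:ℝ) 1, |f x - f y| ≤ L * |x - y|)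
    (hfnn : ∀ x ∈ Icc (0:ℝ) 1, 0 ≤ f x) (hfL : ∀ x ∈ Icc (0:ℝ) 1, f x ≤ L * x)
    (hk : 0 ≤ k) (hh : 0 < h) (hCFL : k * max L |α| ≤ h / 2) (hΔ : h ≤ Δ) (hM : M ≤ 1)
    (ha : a ∈ Icc 0 M) (hb : b ∈ Icc 0 M) (hc : c ∈ Icc 0 M) (hd : d ∈ Icc 0 M) :
    HBR f α k h Δ a b c d ∈ Icc 0 M := by
  have ha₁ : a ∈ Icc (0:ℝ) 1 := ⟨ha.1, ha.2.trans hM⟩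
  have hb₁ : b ∈ Icc (0:ℝ) 1 := ⟨hb.1, hb.2.trans hM⟩
  have hc₁ : c ∈ Icc (0:ℝ) 1 := ⟨hc.1, hc.2.trans hM⟩
  have hMb : 0 ≤ M - b := sub_nonneg.2 hb.2
  have hMc : 0 ≤ M - c := sub_nonneg.2 hc.2
  have hkL := mul_le_half_of_cfl hk hCFL
  have hD : 0 < Δ + h - α * k := by
    linarith [le_abs_self (α * k), abs_mul_le_half_of_cfl hk hCFL]
  obtain ⟨hXlo, hXhi⟩ := hplus_mem_Icc_left hL hlip hM hc hd
  have hin := neg_mul_le_h0flux_sub (a := a) (α := α) hb.1 (hfL b hb₁)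
  have hout := h0flux_sub_add_le (L := L) (α := α) hb.2 ha (hfnn b hb₁) (hfnn a ha₁)
  have hbc := abs_le.1 (abs_sub_le_mul_sub_add_sub hL hlip hM hb hc)
  rw [HBR, mem_Icc, div_le_iff₀ hD]
  refine ⟨div_nonneg ?_ hD.le, ?_⟩
  · linarith [mul_le_mul_of_nonneg_left hXhi hk, mul_le_mul_of_nonneg_left hin hk,
      mul_le_mul_of_nonneg_left (hfL c hc₁) hk, mul_nonneg hk (hfnn b hb₁),
      mul_le_mul_of_nonneg_right hCFL hb.1, mul_le_mul_of_nonneg_right hkL hc.1,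
      mul_le_mul_of_nonneg_right hΔ hb.1, mul_nonneg hh.le hb.1]
  · linarith [mul_le_mul_of_nonneg_left hXlo hk, mul_le_mul_of_nonneg_left hout hk,
      mul_le_mul_of_nonneg_left hbc.2 hk, mul_le_mul_of_nonneg_right hCFL hMb,
      mul_le_mul_of_nonneg_right hkL hMc, mul_le_mul_of_nonneg_right hkL hMb,
      mul_le_mul_of_nonneg_right hΔ hMb]

lemma ConcaveOn.nonneg_of_map_zero_of_map_one (hconc : ConcaveOn ℝ (Icc 0 1) f)
    (hf0 : f 0 = 0) (hf1 : f 1 = 0) : ∀ x ∈ Icc (0:ℝ) 1, 0 ≤ f x := fun x hx => by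
  simpa [hf0, hf1] using
    hconc.min_le_of_mem_Icc (left_mem_Icc.2 zero_le_one) (right_mem_Icc.2 zero_le_one) hx

lemma le_mul_of_lipschitz_of_map_zero
    (hlip : ∀ x ∈ Icc (0:ℝ) 1, ∀ y ∈ Icc (0:ℝ) 1, |g x - g y| ≤ L * |x - y|)
    (hg0 : g 0 = 0) : ∀ x ∈ Icc (0:ℝ) 1, g x ≤ L * x := fun x hx => by
  simpa [hg0, abs_of_nonneg hx.1] using
    (le_abs_self _).trans (hlip x hx 0 (left_mem_Icc.2 zero_le_one))

theorem stmt_16_general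
    (f : ℝ → ℝ)
    (hconc : ConcaveOn ℝ (Set.Icc 0 1) f)
    (L : ℝ) (hL : 0 < L)
    (hlip : ∀ x ∈ Set.Icc (0:ℝ) 1, ∀ y ∈ Set.Icc (0:ℝ) 1, |f x - f y| ≤ L * |x - y|)
    (hf0 : f 0 = 0) (hf1 : f 1 = 0)
    (k h α ΔL ΔR : ℝ) (hk : 0 < k) (hh : 0 < h)
    (hCFL : k * max L |α| ≤ h / 2)
    (hΔL : h ≤ ΔL ∧ ΔL ≤ 2 * h) (hΔR : h ≤ ΔR ∧ ΔR ≤ 2 * h)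
    (M : ℝ) (hM : M ∈ Set.Icc (0:ℝ) 1) :
    (∀ a b c : ℝ, a ∈ Set.Icc 0 M → b ∈ Set.Icc 0 M → c ∈ Set.Icc 0 M →
      Hplus f k h a b c ∈ Set.Icc 0 M ∧
      Hminus f k h a b c ∈ Set.Icc 0 M ∧
      HABL f α k ΔL a b c ∈ Set.Icc 0 M ∧
      HACR f α k ΔR a b c ∈ Set.Icc 0 M) ∧
    (∀ a b c d : ℝ, a ∈ Set.Icc 0 M → b ∈ Set.Icc 0 M → c ∈ Set.Icc 0 M →
      d ∈ Set.Icc 0 M →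
      HCL f α k h ΔL a b c d ∈ Set.Icc 0 M ∧
      HBR f α k h ΔR a b c d ∈ Set.Icc 0 M) := by
  have hfnn := hconc.nonneg_of_map_zero_of_map_one hf0 hf1
  have hfL := le_mul_of_lipschitz_of_map_zero hlip hf0
  have hkL := mul_le_half_of_cfl hk.le hCFL
  refine ⟨fun a b c ha hb hc => ⟨?_, ?_, ?_, ?_⟩, fun a b c d ha hb hc hd => ⟨?_, ?_⟩⟩
  · exact Hplus_mem_Icc hL.le hlip hk.le hh hkL hM.2 ha hb hc
  · -- `Hminus f` unfolds to `Hplus (fun s => -f s)`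
    exact Hplus_mem_Icc hL.le (lipschitz_neg hlip) hk.le hh hkL hM.2 ha hb hc
  · exact HABL_mem_Icc hL.le hlip hfnn hfL hk.le hh hCFL hΔL.1 hM.2 ha hb hc
  · exact HACR_mem_Icc hL.le hlip hfnn hfL hk.le hh hCFL hΔR.1 hM.2 ha hb hc
  · exact HCL_mem_Icc hL.le hlip hfnn hfL hk.le hh hCFL hΔL.1 hM.2 ha hb hc hd
  · exact HBR_mem_Icc hL.le hlip hfnn hfL hk.le hh hCFL hΔR.1 hM.2 ha hb hc hd

/-- Uniform `L^∞` bound: all the marching operators of the moving-mesh Godunov scheme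
map `[0, M]`-valued data to `[0, M]`-valued data, so the finite volume approximations
remain in `[0, ‖ρ₀‖_∞]` for all times. -/
theorem stmt_16
    (f : ℝ → ℝ)
    (hcont : ContinuousOn f (Set.Icc 0 1))
    (hconc : ConcaveOn ℝ (Set.Icc 0 1) f)
    (L : ℝ) (hL : 0 < L)
    (hlip : ∀ x ∈ Set.Icc (0:ℝ) 1, ∀ y ∈ Set.Icc (0:ℝ) 1, |f x - f y| ≤ L * |x - y|)
    (hf0 : f 0 = 0) (hf1 : f 1 = 0)
    (k h α ΔL ΔR : ℝ) (hk : 0 < k) (hh : 0 < h)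
    (hCFL : k * max L |α| ≤ h / 2)
    (hΔL : h ≤ ΔL ∧ ΔL ≤ 2 * h) (hΔR : h ≤ ΔR ∧ ΔR ≤ 2 * h)
    (M : ℝ) (hM : M ∈ Set.Icc (0:ℝ) 1) :
    (∀ a b c : ℝ, a ∈ Set.Icc 0 M → b ∈ Set.Icc 0 M → c ∈ Set.Icc 0 M →
      Hplus f k h a b c ∈ Set.Icc 0 M ∧
      Hminus f k h a b c ∈ Set.Icc 0 M ∧
      HABL f α k ΔL a b c ∈ Set.Icc 0 M ∧
      HACR f α k ΔR a b c ∈ Set.Icc 0 M) ∧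
    (∀ a b c d : ℝ, a ∈ Set.Icc 0 M → b ∈ Set.Icc 0 M → c ∈ Set.Icc 0 M →
      d ∈ Set.Icc 0 M →
      HCL f α k h ΔL a b c d ∈ Set.Icc 0 M ∧
      HBR f α k h ΔR a b c d ∈ Set.Icc 0 M) :=
  stmt_16_general f hconc L hL hlip hf0 hf1 k h α ΔL ΔR hk hh hCFL hΔL hΔR M hM
end
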